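/- arXiv:2506.14773 — 8 statements merged into one kernel-verified Lean document; each statement's English description precedes it below -/
import Mathlib

section
/- Let A, B, C, D ∈ ℝ² be four pairwise distinct points and k_A, k_B, k_C, k_D four nonzero real numbers. Assume Condition (i): no three of the points A, B, C, D are collinear; and Condition (ii): there is no point P ∈ ℝ² and no three distinct points T among A, B, C, D with k_T‖P−T‖² = 1 for all three. Then the set of real solutions of System (*) is finite. -/
/-!
If there were infinitely many real solutions, an infinite subset of them with prime vanishing
ideal would have a generic point `(X, Y)` over its function field `F`, with a coordinate
transcendental over `ℝ`. Some valuation ring `V ⊇ ℝ` of `F` then misses that coordinate, so `X`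
or `Y`, say `X`, has a pole. Squared distances from `X` to two distinct real centres cannot both be
bounded, so `‖X - T‖²` has a pole at three of the four centres `T`, and there the equation forces
`‖Y - T‖²` to reduce to `1 / k_T` in the residue field. Hence `Y` is bounded and its reduction
lies on three of the circles `k_T ‖P - T‖² = 1`; as the centres are not collinear, subtracting
these equations pairwise gives a linear system with real coefficients, so that reduction is a real
point, contradicting Condition (ii).
-/

/-- The squared Euclidean "norm" on `ℝ²`: sum of squares of the coordinates. -/
def sq2 (u : ℝ × ℝ) : ℝ := u.1 ^ 2 + u.2 ^ 2

/-- `(X, Y) ∈ ℝ² × ℝ²` is a real solution of System (*) for the configuration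
`A, B, C, D` with constants `kA, kB, kC, kD`. -/
def IsRealSol (A B C D : ℝ × ℝ) (kA kB kC kD : ℝ) (X Y : ℝ × ℝ) : Prop :=
  (X ≠ A ∧ X ≠ B ∧ X ≠ C ∧ X ≠ D) ∧
  (Y ≠ A ∧ Y ≠ B ∧ Y ≠ C ∧ Y ≠ D) ∧
  1 / sq2 (X - A) + 1 / sq2 (Y - A) = kA ∧
  1 / sq2 (X - B) + 1 / sq2 (Y - B) = kB ∧
  1 / sq2 (X - C) + 1 / sq2 (Y - C) = kC ∧
  1 / sq2 (X - D) + 1 / sq2 (Y - D) = kD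

lemma sq2_sub_ne_zero {P Q : ℝ × ℝ} (h : P ≠ Q) : sq2 (P - Q) ≠ 0 := by
  simpa [sq2, add_eq_zero_iff_of_nonneg, sq_nonneg, Prod.ext_iff, sub_eq_zero] using h

lemma det_ne_zero_of_not_collinear {T₁ T₂ T₃ : ℝ × ℝ}
    (h : ¬ Collinear ℝ ({T₁, T₂, T₃} : Set (ℝ × ℝ))) :
    (T₂.1 - T₁.1) * (T₃.2 - T₁.2) - (T₂.2 - T₁.2) * (T₃.1 - T₁.1) ≠ 0 := by
  intro hdet
  rcases eq_or_ne T₂ T₁ with rfl | h₂₁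
  · exact h (by simpa using collinear_pair ℝ T₂ T₃)
  refine h ((collinear_iff_of_mem (p₀ := T₁) (by simp)).2 ⟨T₂ - T₁, ?_⟩)
  simp only [Set.mem_insert_iff, Set.mem_singleton_iff, forall_eq_or_imp, forall_eq]
  refine ⟨⟨0, by simp⟩, ⟨1, by simp⟩, ⟨((T₂ - T₁).1 * (T₃ - T₁).1 + (T₂ - T₁).2 * (T₃ - T₁).2)
    / sq2 (T₂ - T₁), ?_⟩⟩
  have hn := sq2_sub_ne_zero h₂₁
  simp only [sq2, Prod.fst_sub, Prod.snd_sub] at hn ⊢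
  ext <;> simp only [vadd_eq_add, Prod.fst_add, Prod.snd_add, Prod.smul_fst, Prod.smul_snd,
    Prod.fst_sub, Prod.snd_sub, smul_eq_mul] <;> field_simp
  · linear_combination (T₁.2 - T₂.2) * hdet
  · linear_combination (T₂.1 - T₁.1) * hdet

section SqDist

variable {R S : Type*} [CommRing R] [CommRing S]

def sqDist (φ : ℝ →+* R) (x : R × R) (T : ℝ × ℝ) : R :=
  (x.1 - φ T.1) ^ 2 + (x.2 - φ T.2) ^ 2

lemma map_sqDist (f : R →+* S) (φ : ℝ →+* R) (x : R × R) (T : ℝ × ℝ) :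
    f (sqDist φ x T) = sqDist (f.comp φ) (x.map f f) T := by
  simp [sqDist]

lemma sqDist_id (P T : ℝ × ℝ) : sqDist (RingHom.id ℝ) P T = sq2 (P - T) := rfl

/-- `1 / ‖x - T‖² + 1 / ‖y - T‖² = k` with the denominators cleared. -/
def clearedEq (φ : ℝ →+* R) (x y : R × R) (T : ℝ × ℝ) (k : ℝ) : R :=
  sqDist φ x T + sqDist φ y T - φ k * sqDist φ x T * sqDist φ y T

lemma clearedEq_comm (φ : ℝ →+* R) (x y : R × R) (T : ℝ × ℝ) (k : ℝ) :
    clearedEq φ x y T k = clearedEq φ y x T k := by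
  unfold clearedEq; ring

open MvPolynomial in
lemma aeval_clearedEq [Algebra ℝ R] (ζ : Fin 4 → R) (T : ℝ × ℝ) (k : ℝ) :
    aeval ζ (clearedEq C (X 0, X 1) (X 2, X 3) T k)
      = clearedEq (algebraMap ℝ R) (ζ 0, ζ 1) (ζ 2, ζ 3) T k := by
  simp [clearedEq, sqDist]

end SqDist

lemma clearedEq_eq_zero {X Y T : ℝ × ℝ} {k : ℝ} (hX : X ≠ T) (hY : Y ≠ T)
    (h : 1 / sq2 (X - T) + 1 / sq2 (Y - T) = k) : clearedEq (RingHom.id ℝ) X Y T k = 0 := by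
  have := sq2_sub_ne_zero hX
  have := sq2_sub_ne_zero hY
  simp only [clearedEq, sqDist_id, RingHom.id_apply, ← h]
  field_simp
  ring

lemma exists_eq_map_of_det_ne_zero {k : Type*} [Field k] (ρ : ℝ →+* k) {a b c d e f : ℝ}
    (hdet : a * d - b * c ≠ 0) {y : k × k}
    (h₁ : ρ a * y.1 + ρ b * y.2 = ρ e) (h₂ : ρ c * y.1 + ρ d * y.2 = ρ f) :
    ∃ P : ℝ × ℝ, y = P.map ρ ρ := by
  have hρ : ρ (a * d - b * c) ≠ 0 := (map_ne_zero ρ).2 hdet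
  refine ⟨((e * d - b * f) / (a * d - b * c), (a * f - e * c) / (a * d - b * c)), ?_⟩
  ext <;> simp only [Prod.map_fst, Prod.map_snd, map_div₀] <;> rw [eq_div_iff hρ] <;>
    simp only [map_sub, map_mul]
  · linear_combination ρ d * h₁ - ρ b * h₂
  · linear_combination ρ a * h₂ - ρ c * h₁

lemma exists_eq_map_of_sqDist_eq {k : Type*} [Field k] (ρ : ℝ →+* k) {y : k × k}
    {T₁ T₂ T₃ : ℝ × ℝ} {c₁ c₂ c₃ : ℝ} (hT : ¬ Collinear ℝ ({T₁, T₂, T₃} : Set (ℝ × ℝ)))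
    (h₁ : sqDist ρ y T₁ = ρ c₁) (h₂ : sqDist ρ y T₂ = ρ c₂) (h₃ : sqDist ρ y T₃ = ρ c₃) :
    ∃ P : ℝ × ℝ, y = P.map ρ ρ := by
  have hdet := det_ne_zero_of_not_collinear hT
  refine exists_eq_map_of_det_ne_zero ρ (a := 2 * (T₂.1 - T₁.1)) (b := 2 * (T₂.2 - T₁.2))
    (c := 2 * (T₃.1 - T₁.1)) (d := 2 * (T₃.2 - T₁.2)) (fun h ↦ hdet (by linear_combination h / 4))
    (e := c₁ - c₂ - sq2 T₁ + sq2 T₂) (f := c₁ - c₃ - sq2 T₁ + sq2 T₃) ?_ ?_ <;>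
  simp only [sqDist, sq2, map_mul, map_sub, map_add, map_pow, map_ofNat] at h₁ h₂ h₃ ⊢
  · linear_combination h₁ - h₂
  · linear_combination h₁ - h₃

lemma ValuationSubring.mem_of_sq_mem {K : Type*} [Field K] (V : ValuationSubring K) {a : K}
    (h : a ^ 2 ∈ V) : a ∈ V := by
  rcases V.mem_or_inv_mem a with ha | ha
  · exact ha
  rcases eq_or_ne a 0 with rfl | ha0
  · exact V.zero_mem
  simpa [pow_two, ha0] using V.mul_mem _ _ h ha

section Valuation

variable {K : Type*} [Field K] (V : ValuationSubring K) {φ : ℝ →+* K}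

lemma valuation_map_eq_one (hφ : ∀ r, φ r ∈ V) {r : ℝ} (hr : r ≠ 0) :
    V.valuation (φ r) = 1 :=
  (V.valuation_eq_one_iff ⟨φ r, hφ r⟩).1 <| .of_mul_eq_one ⟨φ r⁻¹, hφ _⟩ <|
    Subtype.ext <| by simp [hr]

/-- The scalar and cross products of `x - T` with `S - T` are bounded, by polarization and by
Lagrange's identity, and they determine `x - T`. -/
lemma mem_of_sqDist_mem (hφ : ∀ r, φ r ∈ V) {x : K × K} {T S : ℝ × ℝ} (hTS : T ≠ S)
    (hT : sqDist φ x T ∈ V) (hS : sqDist φ x S ∈ V) : x.1 ∈ V ∧ x.2 ∈ V := by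
  have hinv : ∀ {r : ℝ}, r ≠ 0 → φ r⁻¹ * φ r = 1 := fun hr ↦ by
    rw [← map_mul, inv_mul_cancel₀ hr, map_one]
  have h₂ := hinv (two_ne_zero (α := ℝ))
  have hn := hinv (sq2_sub_ne_zero hTS.symm)
  have h₂V := hφ 2⁻¹
  have hnV := hφ (sq2 (S - T))⁻¹
  have hTV₁ := hφ T.1
  have hTV₂ := hφ T.2
  have hSV₁ := hφ S.1
  have hSV₂ := hφ S.2
  obtain ⟨x₁, x₂⟩ := x
  simp only [sqDist, sq2, Prod.fst_sub, Prod.snd_sub, map_add, map_sub, map_pow, map_ofNat]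
    at hT hS hn h₂ hnV ⊢
  generalize φ 2⁻¹ = h at *
  generalize φ (((S.1 - T.1) ^ 2 + (S.2 - T.2) ^ 2)⁻¹) = m at *
  generalize φ T.1 = t₁ at *
  generalize φ T.2 = t₂ at *
  generalize φ S.1 = s₁ at *
  generalize φ S.2 = s₂ at *
  have hdot : (x₁ - t₁) * (s₁ - t₁) + (x₂ - t₂) * (s₂ - t₂) ∈ V := by
    have : (x₁ - t₁) * (s₁ - t₁) + (x₂ - t₂) * (s₂ - t₂)
        = h * ((x₁ - t₁) ^ 2 + (x₂ - t₂) ^ 2 + ((s₁ - t₁) ^ 2 + (s₂ - t₂) ^ 2)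
          - ((x₁ - s₁) ^ 2 + (x₂ - s₂) ^ 2)) := by
      linear_combination (-((x₁ - t₁) * (s₁ - t₁) + (x₂ - t₂) * (s₂ - t₂))) * h₂
    rw [this]
    apply_rules [mul_mem, add_mem, sub_mem, pow_mem]
  have hcross : (x₁ - t₁) * (s₂ - t₂) - (x₂ - t₂) * (s₁ - t₁) ∈ V := V.mem_of_sq_mem <| by
    have : ((x₁ - t₁) * (s₂ - t₂) - (x₂ - t₂) * (s₁ - t₁)) ^ 2
        = ((s₁ - t₁) ^ 2 + (s₂ - t₂) ^ 2) * ((x₁ - t₁) ^ 2 + (x₂ - t₂) ^ 2)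
          - ((x₁ - t₁) * (s₁ - t₁) + (x₂ - t₂) * (s₂ - t₂)) ^ 2 := by
      ring
    rw [this]
    apply_rules [mul_mem, add_mem, sub_mem, pow_mem]
  constructor
  · have : x₁ = t₁ + m * (((x₁ - t₁) * (s₁ - t₁) + (x₂ - t₂) * (s₂ - t₂)) * (s₁ - t₁)
        + ((x₁ - t₁) * (s₂ - t₂) - (x₂ - t₂) * (s₁ - t₁)) * (s₂ - t₂)) := by
      linear_combination (t₁ - x₁) * hn
    rw [this]
    apply_rules [mul_mem, add_mem, sub_mem, pow_mem]
  · have : x₂ = t₂ + m * (((x₁ - t₁) * (s₁ - t₁) + (x₂ - t₂) * (s₂ - t₂)) * (s₂ - t₂)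
        - ((x₁ - t₁) * (s₂ - t₂) - (x₂ - t₂) * (s₁ - t₁)) * (s₁ - t₁)) := by
      linear_combination (t₂ - x₂) * hn
    rw [this]
    apply_rules [mul_mem, add_mem, sub_mem, pow_mem]

/-- `w (k - u⁻¹) = 1`, and `u⁻¹` lies in the maximal ideal. -/
lemma exists_residue_eq_of_not_mem (hφ : ∀ r, φ r ∈ V) {u w : K} {k : ℝ} (hk : k ≠ 0)
    (hu : u ∉ V) (h : u + w - φ k * u * w = 0) :
    ∃ hw : w ∈ V, IsLocalRing.residue V ⟨w, hw⟩ = IsLocalRing.residue V ⟨φ k⁻¹, hφ _⟩ := by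
  have hu0 : u ≠ 0 := by rintro rfl; exact hu V.zero_mem
  have hvu : V.valuation u⁻¹ < 1 := V.mem_nonunits_iff.1 (V.inv_mem_nonunits_iff.2 (Or.inr hu))
  have hvk : V.valuation (φ k) = 1 := valuation_map_eq_one V hφ hk
  have hwk : w * (φ k - u⁻¹) = 1 := by
    field_simp
    linear_combination -h
  have hvw : V.valuation w = 1 := by
    have := congrArg V.valuation hwk
    rwa [map_mul, V.valuation.map_sub_eq_of_lt_left (by rwa [hvk]), hvk, mul_one, map_one] at this
  refine ⟨(V.valuation_le_one_iff w).1 hvw.le, ?_⟩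
  rw [← sub_eq_zero, ← map_sub, IsLocalRing.residue_eq_zero_iff, V.valuation_lt_one_iff]
  have hk' : φ k⁻¹ * φ k = 1 := by rw [← map_mul, inv_mul_cancel₀ hk, map_one]
  have : w - φ k⁻¹ = φ k⁻¹ * w * u⁻¹ := by
    linear_combination (φ k⁻¹) * hwk - w * hk'
  show V.valuation (w - φ k⁻¹) < 1
  rw [this, map_mul, map_mul, hvw, valuation_map_eq_one V hφ (inv_ne_zero hk), one_mul, one_mul]
  exact hvu

theorem exists_sq2_eq_of_not_mem (hφ : ∀ r, φ r ∈ V) {x y : K × K} {T₁ T₂ T₃ : ℝ × ℝ}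
    {k₁ k₂ k₃ : ℝ} (hT : ¬ Collinear ℝ ({T₁, T₂, T₃} : Set (ℝ × ℝ)))
    (hk₁ : k₁ ≠ 0) (hk₂ : k₂ ≠ 0) (hk₃ : k₃ ≠ 0)
    (hx₁ : sqDist φ x T₁ ∉ V) (hx₂ : sqDist φ x T₂ ∉ V) (hx₃ : sqDist φ x T₃ ∉ V)
    (h₁ : clearedEq φ x y T₁ k₁ = 0) (h₂ : clearedEq φ x y T₂ k₂ = 0)
    (h₃ : clearedEq φ x y T₃ k₃ = 0) :
    ∃ P : ℝ × ℝ, k₁ * sq2 (P - T₁) = 1 ∧ k₂ * sq2 (P - T₂) = 1 ∧ k₃ * sq2 (P - T₃) = 1 := by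
  obtain ⟨hw₁, hr₁⟩ := exists_residue_eq_of_not_mem V hφ hk₁ hx₁ h₁
  obtain ⟨hw₂, hr₂⟩ := exists_residue_eq_of_not_mem V hφ hk₂ hx₂ h₂
  obtain ⟨hw₃, hr₃⟩ := exists_residue_eq_of_not_mem V hφ hk₃ hx₃ h₃
  have hT₁₂ : T₁ ≠ T₂ := by
    rintro rfl
    exact hT (by simpa using collinear_pair ℝ T₁ T₃)
  obtain ⟨hy₁, hy₂⟩ := mem_of_sqDist_mem V hφ hT₁₂ hw₁ hw₂
  let φV : ℝ →+* V := φ.codRestrict V.toSubring hφ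
  let ρ : ℝ →+* IsLocalRing.ResidueField V := (IsLocalRing.residue V).comp φV
  let y' : V × V := (⟨y.1, hy₁⟩, ⟨y.2, hy₂⟩)
  have hres : ∀ {T : ℝ × ℝ} {k : ℝ} (hw : sqDist φ y T ∈ V),
      IsLocalRing.residue V ⟨_, hw⟩ = IsLocalRing.residue V ⟨φ k⁻¹, hφ _⟩ →
      sqDist ρ (y'.map (IsLocalRing.residue V) (IsLocalRing.residue V)) T = ρ k⁻¹ := by
    intro T k hw hr
    rw [show ρ k⁻¹ = IsLocalRing.residue V ⟨φ k⁻¹, hφ _⟩ from rfl, ← hr, ← map_sqDist]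
    congr 1
  obtain ⟨P, hP⟩ := exists_eq_map_of_sqDist_eq ρ hT (hres hw₁ hr₁) (hres hw₂ hr₂) (hres hw₃ hr₃)
  have hPT : ∀ {T : ℝ × ℝ} {k : ℝ}, k ≠ 0 → sqDist ρ (P.map ρ ρ) T = ρ k⁻¹ →
      k * sq2 (P - T) = 1 := by
    intro T k hk hPk
    apply ρ.injective
    rw [map_mul, ← sqDist_id, map_sqDist, RingHom.comp_id, hPk, ← map_mul, mul_inv_cancel₀ hk]
  exact ⟨P, hPT hk₁ (hP ▸ hres hw₁ hr₁), hPT hk₂ (hP ▸ hres hw₂ hr₂), hPT hk₃ (hP ▸ hres hw₃ hr₃)⟩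

theorem exists_three_sq2_eq_of_not_mem (hφ : ∀ r, φ r ∈ V) {A B C D : ℝ × ℝ}
    {kA kB kC kD : ℝ} (hAB : A ≠ B) (hAC : A ≠ C) (hAD : A ≠ D) (hBC : B ≠ C) (hBD : B ≠ D)
    (hCD : C ≠ D)
    (hi : ¬ Collinear ℝ ({A, B, C} : Set (ℝ × ℝ)) ∧ ¬ Collinear ℝ ({A, B, D} : Set (ℝ × ℝ)) ∧
      ¬ Collinear ℝ ({A, C, D} : Set (ℝ × ℝ)) ∧ ¬ Collinear ℝ ({B, C, D} : Set (ℝ × ℝ)))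
    (hkA : kA ≠ 0) (hkB : kB ≠ 0) (hkC : kC ≠ 0) (hkD : kD ≠ 0) {x y : K × K}
    (hA : clearedEq φ x y A kA = 0) (hB : clearedEq φ x y B kB = 0)
    (hC : clearedEq φ x y C kC = 0) (hD : clearedEq φ x y D kD = 0)
    (hxy : ¬ (x.1 ∈ V ∧ x.2 ∈ V ∧ y.1 ∈ V ∧ y.2 ∈ V)) :
    ∃ P : ℝ × ℝ,
      (kA * sq2 (P - A) = 1 ∧ kB * sq2 (P - B) = 1 ∧ kC * sq2 (P - C) = 1) ∨
      (kA * sq2 (P - A) = 1 ∧ kB * sq2 (P - B) = 1 ∧ kD * sq2 (P - D) = 1) ∨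
      (kA * sq2 (P - A) = 1 ∧ kC * sq2 (P - C) = 1 ∧ kD * sq2 (P - D) = 1) ∨
      (kB * sq2 (P - B) = 1 ∧ kC * sq2 (P - C) = 1 ∧ kD * sq2 (P - D) = 1) := by
  wlog hx : ¬ (x.1 ∈ V ∧ x.2 ∈ V) generalizing x y
  · rw [clearedEq_comm] at hA hB hC hD
    exact this hA hB hC hD (by tauto) (by tauto)
  have hnot : ∀ {T S}, T ≠ S → sqDist φ x T ∈ V → sqDist φ x S ∉ V := fun hTS hT hS ↦
    hx (mem_of_sqDist_mem V hφ hTS hT hS)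
  have triple := @exists_sq2_eq_of_not_mem _ _ V φ hφ x y
  by_cases hxA : sqDist φ x A ∈ V
  · exact (triple hi.2.2.2 hkB hkC hkD (hnot hAB hxA) (hnot hAC hxA) (hnot hAD hxA) hB hC hD).imp
      fun _ ↦ .inr ∘ .inr ∘ .inr
  by_cases hxB : sqDist φ x B ∈ V
  · exact (triple hi.2.2.1 hkA hkC hkD hxA (hnot hBC hxB) (hnot hBD hxB) hA hC hD).imp
      fun _ ↦ .inr ∘ .inr ∘ .inl
  by_cases hxC : sqDist φ x C ∈ V
  · exact (triple hi.2.1 hkA hkB hkD hxA hxB (hnot hCD hxC) hA hB hD).imp fun _ ↦ .inr ∘ .inl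
  · exact (triple hi.1 hkA hkB hkC hxA hxB hxC hA hB hC).imp fun _ ↦ .inl

end Valuation

section GenericPoint

open MvPolynomial

universe u v

lemma exists_infinite_subset_isPrime_vanishingIdeal {k : Type u} {σ : Type v} [Field k] [Finite σ]
    {S : Set (σ → k)} (hS : S.Infinite) :
    ∃ S₀ ⊆ S, S₀.Infinite ∧ (vanishingIdeal k S₀).IsPrime := by
  obtain ⟨_, ⟨S₀, hS₀S, hS₀, rfl⟩, hmax⟩ := set_has_maximal_iff_noetherian.2 inferInstance
    {I | ∃ S₀ ⊆ S, S₀.Infinite ∧ I = vanishingIdeal k S₀} ⟨_, S, subset_rfl, hS, rfl⟩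
  have hmem : ∀ f, {s ∈ S₀ | aeval s f = 0}.Infinite → f ∈ vanishingIdeal k S₀ := by
    intro f hf
    have hle := vanishingIdeal_anti_mono (k := k) (Set.sep_subset S₀ fun s ↦ aeval s f = 0)
    rw [hle.eq_of_not_lt (hmax _ ⟨_, (Set.sep_subset _ _).trans hS₀S, hf, rfl⟩)]
    exact mem_vanishingIdeal_iff.2 fun s hs ↦ hs.2
  refine ⟨S₀, hS₀S, hS₀, ⟨fun htop ↦ ?_, fun {f g} hfg ↦ ?_⟩⟩
  · obtain ⟨s, hs⟩ := hS₀.nonempty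
    simpa using mem_vanishingIdeal_iff.1 ((Ideal.eq_top_iff_one _).1 htop) s hs
  · have : S₀ = {s ∈ S₀ | aeval s f = 0} ∪ {s ∈ S₀ | aeval s g = 0} := by
      ext s
      simp only [Set.mem_union, Set.mem_ofPred_eq, ← and_or_left, iff_self_and]
      intro hs
      simpa using mem_vanishingIdeal_iff.1 hfg s hs
    rw [this, Set.infinite_union] at hS₀
    exact hS₀.imp (hmem f) (hmem g)

lemma finite_of_forall_isAlgebraic {k : Type u} {σ : Type v} {F : Type*} [Field k] [Finite σ]
    [CommRing F] [IsDomain F] [Algebra k F] {S : Set (σ → k)} {ζ : σ → F}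
    (hζ : ∀ f, aeval ζ f = 0 → f ∈ vanishingIdeal k S) (halg : ∀ j, IsAlgebraic k (ζ j)) :
    S.Finite := by
  choose q hq0 hqζ using halg
  refine (Set.Finite.pi (t := fun j ↦ {t | (q j).IsRoot t})
    fun j ↦ Polynomial.finite_setOfPred_isRoot (hq0 j)).subset fun s hs j _ ↦ ?_
  have := mem_vanishingIdeal_iff.1 (hζ (Polynomial.aeval (X j) (q j))
    (by rw [← Polynomial.aeval_algHom_apply, aeval_X, hqζ])) s hs
  rwa [← Polynomial.aeval_algHom_apply, aeval_X, Polynomial.coe_aeval_eq_eval] at this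

lemma exists_valuationSubring_not_mem {k F : Type*} [Field k] [Field F] [Algebra k F] {f : F}
    (hf : Transcendental k f) :
    ∃ V : ValuationSubring F, (∀ r, algebraMap k F r ∈ V) ∧ f ∉ V := by
  obtain ⟨V, hle, hfV⟩ := Subring.exists_le_valuationSubring_of_isIntegrallyClosedIn
    (R := (integralClosure k F).toSubring) (x := f) fun h ↦ hf h.isAlgebraic
  exact ⟨V, fun r ↦ hle isIntegral_algebraMap, hfV⟩

theorem exists_valuationSubring_point_of_infinite {k : Type u} {σ : Type v} [Field k] [Finite σ]
    {S : Set (σ → k)} (hS : S.Infinite) :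
    ∃ (F : Type (max u v)) (_ : Field F) (_ : Algebra k F) (V : ValuationSubring F) (ζ : σ → F),
      (∀ r, algebraMap k F r ∈ V) ∧ (∃ j, ζ j ∉ V) ∧ ∀ f ∈ vanishingIdeal k S, aeval ζ f = 0 := by
  obtain ⟨S₀, hS₀S, hS₀, _⟩ := exists_infinite_subset_isPrime_vanishingIdeal hS
  let F := FractionRing (MvPolynomial σ k ⧸ vanishingIdeal k S₀)
  let Ψ : MvPolynomial σ k →ₐ[k] F :=
    (IsScalarTower.toAlgHom k _ F).comp (Ideal.Quotient.mkₐ k (vanishingIdeal k S₀))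
  have hΨ : aeval (Ψ ∘ X) = Ψ := (aeval_unique Ψ).symm
  have hker : ∀ f, Ψ f = 0 ↔ f ∈ vanishingIdeal k S₀ := fun f ↦ by
    simp [Ψ, Ideal.Quotient.eq_zero_iff_mem]
  obtain ⟨j, hj⟩ : ∃ j, Transcendental k (Ψ (X j)) := by
    by_contra! halg
    exact hS₀ (finite_of_forall_isAlgebraic (fun f hf ↦ (hker f).1 (hΨ ▸ hf))
      fun j ↦ of_not_not (halg j))
  obtain ⟨V, hV, hjV⟩ := exists_valuationSubring_not_mem hj
  refine ⟨F, inferInstance, inferInstance, V, Ψ ∘ X, hV, ⟨j, hjV⟩, fun f hf ↦ ?_⟩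
  rw [hΨ, hker]
  exact vanishingIdeal_anti_mono hS₀S hf

end GenericPoint

open MvPolynomial in
theorem finitely_many_real_solutions
    (A B C D : ℝ × ℝ) (kA kB kC kD : ℝ)
    (hAB : A ≠ B) (hAC : A ≠ C) (hAD : A ≠ D)
    (hBC : B ≠ C) (hBD : B ≠ D) (hCD : C ≠ D)
    (hkA : kA ≠ 0) (hkB : kB ≠ 0) (hkC : kC ≠ 0) (hkD : kD ≠ 0)
    -- Condition (i): no three of the points A, B, C, D are collinear
    (hi : ¬ Collinear ℝ ({A, B, C} : Set (ℝ × ℝ)) ∧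
          ¬ Collinear ℝ ({A, B, D} : Set (ℝ × ℝ)) ∧
          ¬ Collinear ℝ ({A, C, D} : Set (ℝ × ℝ)) ∧
          ¬ Collinear ℝ ({B, C, D} : Set (ℝ × ℝ)))
    -- Condition (ii): no three of the four circles of center T and radius 1/√kT
    -- share a common point of ℝ²
    (hii : ¬ ∃ P : ℝ × ℝ,
      (kA * sq2 (P - A) = 1 ∧ kB * sq2 (P - B) = 1 ∧ kC * sq2 (P - C) = 1) ∨
      (kA * sq2 (P - A) = 1 ∧ kB * sq2 (P - B) = 1 ∧ kD * sq2 (P - D) = 1) ∨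
      (kA * sq2 (P - A) = 1 ∧ kC * sq2 (P - C) = 1 ∧ kD * sq2 (P - D) = 1) ∨
      (kB * sq2 (P - B) = 1 ∧ kC * sq2 (P - C) = 1 ∧ kD * sq2 (P - D) = 1)) :
    {XY : (ℝ × ℝ) × (ℝ × ℝ) |
      IsRealSol A B C D kA kB kC kD XY.1 XY.2}.Finite := by
  refine Set.not_infinite.1 fun hinf ↦ ?_
  let emb : (ℝ × ℝ) × (ℝ × ℝ) → Fin 4 → ℝ := fun z ↦ ![z.1.1, z.1.2, z.2.1, z.2.2]
  have hemb : Function.Injective emb := fun z z' h ↦ by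
    simp only [emb, Matrix.vecCons_inj] at h
    ext <;> tauto
  obtain ⟨F, _, _, V, ζ, hV, ⟨j, hj⟩, hζ⟩ :=
    exists_valuationSubring_point_of_infinite (hinf.image hemb.injOn)
  have hsol : ∀ T k, (∀ z : (ℝ × ℝ) × (ℝ × ℝ), IsRealSol A B C D kA kB kC kD z.1 z.2 →
      z.1 ≠ T ∧ z.2 ≠ T ∧ 1 / sq2 (z.1 - T) + 1 / sq2 (z.2 - T) = k) →
      clearedEq (algebraMap ℝ F) (ζ 0, ζ 1) (ζ 2, ζ 3) T k = 0 := by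
    intro T k h
    rw [← aeval_clearedEq]
    refine hζ _ (mem_vanishingIdeal_iff.2 ?_)
    rintro _ ⟨z, hz, rfl⟩
    obtain ⟨hX, hY, hk⟩ := h z hz
    simpa [aeval_clearedEq, emb] using clearedEq_eq_zero hX hY hk
  refine hii (exists_three_sq2_eq_of_not_mem V hV hAB hAC hAD hBC hBD hCD hi hkA hkB hkC hkD
    (hsol A kA fun z hz ↦ ⟨hz.1.1, hz.2.1.1, hz.2.2.1⟩)
    (hsol B kB fun z hz ↦ ⟨hz.1.2.1, hz.2.1.2.1, hz.2.2.2.1⟩)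
    (hsol C kC fun z hz ↦ ⟨hz.1.2.2.1, hz.2.1.2.2.1, hz.2.2.2.2.1⟩)
    (hsol D kD fun z hz ↦ ⟨hz.1.2.2.2, hz.2.1.2.2.2, hz.2.2.2.2.2⟩) ?_)
  rintro ⟨h₀, h₁, h₂, h₃⟩
  fin_cases j <;> contradiction
end

section
/- Let A, B, C, D ∈ ℝ² be four pairwise distinct points with A, B, C not collinear, and let k_A, k_B, k_C, k_D be nonzero real numbers. If (X_P, Y_P) and (X_Q, Y_Q) are real solutions of System (*) with Y_P = Y_Q, then X_P = X_Q. In other words, every real solution (X_P, Y_P) of System (*) is uniquely determined by Y_P. -/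
lemma sq2_eq_zero_iff {u : ℝ × ℝ} : sq2 u = 0 ↔ u = 0 := by
  simp [sq2, Prod.ext_iff, add_eq_zero_iff_of_nonneg, sq_nonneg]

lemma exists_smul_rotate_of_dot_eq_zero {w u : ℝ × ℝ} (hw : w ≠ 0)
    (h : w.1 * u.1 + w.2 * u.2 = 0) : ∃ r : ℝ, u = r • (-w.2, w.1) := by
  have hw' : sq2 w ≠ 0 := mt sq2_eq_zero_iff.mp hw
  refine ⟨(w.1 * u.2 - w.2 * u.1) / sq2 w, Prod.ext ?_ ?_⟩ <;>
    simp only [Prod.smul_mk, smul_eq_mul] <;> field_simp <;> unfold sq2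
  · linear_combination w.1 * h
  · linear_combination w.2 * h

lemma collinear_of_forall_dot_sub_eq_zero {s : Set (ℝ × ℝ)} {A w : ℝ × ℝ} (hA : A ∈ s)
    (hw : w ≠ 0) (h : ∀ p ∈ s, w.1 * (p - A).1 + w.2 * (p - A).2 = 0) : Collinear ℝ s := by
  rw [collinear_iff_of_mem hA]
  refine ⟨(-w.2, w.1), fun p hp => ?_⟩
  obtain ⟨r, hr⟩ := exists_smul_rotate_of_dot_eq_zero hw (h p hp)
  exact ⟨r, by rw [← hr, vadd_eq_add, sub_add_cancel]⟩

theorem eq_of_sq2_sub_eq_of_not_collinear {A B C X X' : ℝ × ℝ}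
    (hABC : ¬ Collinear ℝ ({A, B, C} : Set (ℝ × ℝ)))
    (hA : sq2 (X - A) = sq2 (X' - A)) (hB : sq2 (X - B) = sq2 (X' - B))
    (hC : sq2 (X - C) = sq2 (X' - C)) : X = X' := by
  by_contra hne
  have orthogonal : ∀ T, sq2 (X - T) = sq2 (X' - T) →
      (X - X').1 * (T - A).1 + (X - X').2 * (T - A).2 = 0 := by
    intro T hT
    simp only [sq2, Prod.fst_sub, Prod.snd_sub] at hA hT ⊢
    linear_combination (hA - hT) / 2
  refine hABC (collinear_of_forall_dot_sub_eq_zero (Set.mem_insert A _) (sub_ne_zero.mpr hne) ?_)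
  rintro p (rfl | rfl | rfl)
  exacts [orthogonal _ hA, orthogonal _ hB, orthogonal _ hC]

theorem solution_determined_by_Y_general
    (A B C D : ℝ × ℝ) (kA kB kC kD : ℝ)
    (habc : ¬ Collinear ℝ ({A, B, C} : Set (ℝ × ℝ)))
    (XP YP XQ YQ : ℝ × ℝ)
    (hP : IsRealSol A B C D kA kB kC kD XP YP)
    (hQ : IsRealSol A B C D kA kB kC kD XQ YQ)
    (hY : YP = YQ) :
    XP = XQ := by
  subst hY
  obtain ⟨-, -, hPA, hPB, hPC, -⟩ := hP
  obtain ⟨-, -, hQA, hQB, hQC, -⟩ := hQ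
  have cancel : ∀ {a b c k : ℝ}, 1 / a + c = k → 1 / b + c = k → a = b :=
    fun h h' => by simpa using h.trans h'.symm
  exact eq_of_sq2_sub_eq_of_not_collinear habc (cancel hPA hQA) (cancel hPB hQB) (cancel hPC hQC)

/-- Every real solution `(X, Y)` of System (*) is uniquely determined by `Y`. -/
theorem solution_determined_by_Y
    (A B C D : ℝ × ℝ) (kA kB kC kD : ℝ)
    (hAB : A ≠ B) (hAC : A ≠ C) (hAD : A ≠ D)
    (hBC : B ≠ C) (hBD : B ≠ D) (hCD : C ≠ D)
    (habc : ¬ Collinear ℝ ({A, B, C} : Set (ℝ × ℝ)))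
    (hkA : kA ≠ 0) (hkB : kB ≠ 0) (hkC : kC ≠ 0) (hkD : kD ≠ 0)
    (XP YP XQ YQ : ℝ × ℝ)
    (hP : IsRealSol A B C D kA kB kC kD XP YP)
    (hQ : IsRealSol A B C D kA kB kC kD XQ YQ)
    (hY : YP = YQ) :
    XP = XQ :=
  solution_determined_by_Y_general A B C D kA kB kC kD habc XP YP XQ YQ hP hQ hY
end

section
/- Let A = (a₁,a₂), B = (b₁,b₂), C = (c₁,c₂), D = (d₁,d₂) ∈ ℝ² be pairwise distinct with A, B, C not collinear, let k_A, k_B, k_C, k_D be nonzero reals, and set Δ = (a₁−b₁)(a₂−c₂) − (a₂−b₂)(a₁−c₁) (so Δ ≠ 0). If (X, Y) is a real solution of System (*) with X = (x₁, x₂), then k_T‖Y−T‖² ≠ 1 for all T (so Γ_T(Y) is well defined) and: x₁ = (1/(2Δ))·[(Γ_B(Y)−Γ_A(Y))(a₂−c₂) − (a₂−b₂)(Γ_C(Y)−Γ_A(Y))] and x₂ = (1/(2Δ))·[(a₁−b₁)(Γ_C(Y)−Γ_A(Y)) − (Γ_B(Y)−Γ_A(Y))(a₁−c₁)]. -/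
/-- The rational function `Γ_T(Y) = ‖Y−T‖²/(k_T‖Y−T‖² − 1) − ‖T‖²`. -/
noncomputable def Gamma (k : ℝ) (T Y : ℝ × ℝ) : ℝ :=
  sq2 (Y - T) / (k * sq2 (Y - T) - 1) - sq2 T

lemma sq2_ne_zero {u : ℝ × ℝ} (h : u ≠ 0) : sq2 u ≠ 0 := by
  obtain h1 | h2 : u.1 ≠ 0 ∨ u.2 ≠ 0 := by
    by_contra! hc
    exact h (Prod.ext hc.1 hc.2)
  all_goals unfold sq2; positivity

lemma mul_sub_one_eq_div_of_one_div_add_one_div_eq {K : Type*} [Field K] {p q k : K}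
    (hp : p ≠ 0) (hq : q ≠ 0) (h : 1 / p + 1 / q = k) : k * q - 1 = q / p := by
  rw [← h]
  field_simp
  ring

lemma Gamma_eq_of_one_div_add_one_div_eq {k : ℝ} {T X Y : ℝ × ℝ} (hX : X ≠ T) (hY : Y ≠ T)
    (h : 1 / sq2 (X - T) + 1 / sq2 (Y - T) = k) :
    k * sq2 (Y - T) ≠ 1 ∧ Gamma k T Y = sq2 X - 2 * (X.1 * T.1 + X.2 * T.2) := by
  have hp := sq2_ne_zero (sub_ne_zero.mpr hX)
  have hq := sq2_ne_zero (sub_ne_zero.mpr hY)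
  have hkq := mul_sub_one_eq_div_of_one_div_add_one_div_eq hp hq h
  have hne : k * sq2 (Y - T) - 1 ≠ 0 := hkq ▸ div_ne_zero hq hp
  refine ⟨sub_ne_zero.mp hne, ?_⟩
  rw [Gamma, hkq, div_div_cancel₀ hq]
  simp only [sq2, Prod.fst_sub, Prod.snd_sub]
  ring

lemma eq_smul_of_cross_eq_zero {u v : ℝ × ℝ} (hu : u ≠ 0) (h : u.1 * v.2 - u.2 * v.1 = 0) :
    v = ((u.1 * v.1 + u.2 * v.2) / sq2 u) • u := by
  have hu' := sq2_ne_zero hu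
  ext <;> simp only [Prod.smul_fst, Prod.smul_snd, smul_eq_mul] <;> field_simp <;> unfold sq2
  · linear_combination (-u.2) * h
  · linear_combination u.1 * h

lemma cross_sub_ne_zero_of_not_collinear {A B C : ℝ × ℝ}
    (h : ¬ Collinear ℝ ({A, B, C} : Set (ℝ × ℝ))) :
    (A.1 - B.1) * (A.2 - C.2) - (A.2 - B.2) * (A.1 - C.1) ≠ 0 := by
  intro hcross
  apply h
  by_cases hAB : B - A = 0
  · rw [sub_eq_zero.mp hAB, Set.insert_eq_of_mem (Set.mem_insert _ _)]
    exact collinear_pair ℝ A C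
  · have hcross' : (B - A).1 * (C - A).2 - (B - A).2 * (C - A).1 = 0 := by
      simp only [Prod.fst_sub, Prod.snd_sub]
      linear_combination hcross
    have hC : C = AffineMap.lineMap A B
        (((B - A).1 * (C - A).1 + (B - A).2 * (C - A).2) / sq2 (B - A)) := by
      rw [AffineMap.lineMap_apply, vsub_eq_sub, vadd_eq_add,
        ← eq_smul_of_cross_eq_zero hAB hcross', sub_add_cancel]
    rw [Set.pair_comm, Set.insert_comm]
    exact collinear_insert_of_mem_affineSpan_pair (hC ▸ AffineMap.lineMap_mem_affineSpan_pair _ _ _)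

theorem coordinates_of_X_from_Y_general
    (a1 a2 b1 b2 c1 c2 : ℝ) (kA kB kC kD : ℝ)
    (A B C D : ℝ × ℝ)
    (hA : A = (a1, a2)) (hB : B = (b1, b2)) (hC : C = (c1, c2))
    (habc : ¬ Collinear ℝ ({A, B, C} : Set (ℝ × ℝ)))
    (Δ : ℝ) (hΔ : Δ = (a1 - b1) * (a2 - c2) - (a2 - b2) * (a1 - c1))
    (X Y : ℝ × ℝ) (x1 x2 : ℝ) (hX : X = (x1, x2))
    (hsol : IsRealSol A B C D kA kB kC kD X Y) :
    (kA * sq2 (Y - A) ≠ 1 ∧ kB * sq2 (Y - B) ≠ 1 ∧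
     kC * sq2 (Y - C) ≠ 1 ∧ kD * sq2 (Y - D) ≠ 1) ∧
    x1 = (1 / (2 * Δ)) *
      ((Gamma kB B Y - Gamma kA A Y) * (a2 - c2)
        - (a2 - b2) * (Gamma kC C Y - Gamma kA A Y)) ∧
    x2 = (1 / (2 * Δ)) *
      ((a1 - b1) * (Gamma kC C Y - Gamma kA A Y)
        - (Gamma kB B Y - Gamma kA A Y) * (a1 - c1)) := by
  obtain ⟨⟨hXA, hXB, hXC, hXD⟩, ⟨hYA, hYB, hYC, hYD⟩, eA, eB, eC, eD⟩ := hsol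
  obtain ⟨neA, hGA⟩ := Gamma_eq_of_one_div_add_one_div_eq hXA hYA eA
  obtain ⟨neB, hGB⟩ := Gamma_eq_of_one_div_add_one_div_eq hXB hYB eB
  obtain ⟨neC, hGC⟩ := Gamma_eq_of_one_div_add_one_div_eq hXC hYC eC
  obtain ⟨neD, -⟩ := Gamma_eq_of_one_div_add_one_div_eq hXD hYD eD
  subst hA hB hC hX
  have hΔ0 : Δ ≠ 0 := hΔ ▸ cross_sub_ne_zero_of_not_collinear habc
  refine ⟨⟨neA, neB, neC, neD⟩, ?_, ?_⟩ <;>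
  · rw [hGA, hGB, hGC]
    field_simp
    rw [hΔ]
    ring

theorem coordinates_of_X_from_Y
    (a1 a2 b1 b2 c1 c2 d1 d2 : ℝ) (kA kB kC kD : ℝ)
    (A B C D : ℝ × ℝ)
    (hA : A = (a1, a2)) (hB : B = (b1, b2)) (hC : C = (c1, c2)) (hD : D = (d1, d2))
    (hAB : A ≠ B) (hAC : A ≠ C) (hAD : A ≠ D)
    (hBC : B ≠ C) (hBD : B ≠ D) (hCD : C ≠ D)
    (habc : ¬ Collinear ℝ ({A, B, C} : Set (ℝ × ℝ)))
    (hkA : kA ≠ 0) (hkB : kB ≠ 0) (hkC : kC ≠ 0) (hkD : kD ≠ 0)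
    (Δ : ℝ) (hΔ : Δ = (a1 - b1) * (a2 - c2) - (a2 - b2) * (a1 - c1))
    (X Y : ℝ × ℝ) (x1 x2 : ℝ) (hX : X = (x1, x2))
    (hsol : IsRealSol A B C D kA kB kC kD X Y) :
    (kA * sq2 (Y - A) ≠ 1 ∧ kB * sq2 (Y - B) ≠ 1 ∧
     kC * sq2 (Y - C) ≠ 1 ∧ kD * sq2 (Y - D) ≠ 1) ∧
    x1 = (1 / (2 * Δ)) *
      ((Gamma kB B Y - Gamma kA A Y) * (a2 - c2)
        - (a2 - b2) * (Gamma kC C Y - Gamma kA A Y)) ∧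
    x2 = (1 / (2 * Δ)) *
      ((a1 - b1) * (Gamma kC C Y - Gamma kA A Y)
        - (Gamma kB B Y - Gamma kA A Y) * (a1 - c1)) :=
  coordinates_of_X_from_Y_general a1 a2 b1 b2 c1 c2 kA kB kC kD A B C D hA hB hC habc Δ hΔ X Y x1 x2
    hX hsol
end

section
/- Let A = (a₁,a₂), B = (b₁,b₂), C = (c₁,c₂), D = (d₁,d₂) ∈ ℝ² be pairwise distinct and k_A, k_B, k_C, k_D nonzero reals. If (X, Y) is a real solution of System (*), then k_T‖Y−T‖² ≠ 1 for all T (so each Γ_T(Y) is well defined) and the 4×4 determinant with rows (Γ_A(Y), Γ_B(Y), Γ_C(Y), Γ_D(Y)), (a₁, b₁, c₁, d₁), (a₂, b₂, c₂, d₂), (1, 1, 1, 1) is equal to 0. -/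
lemma sq2_pos {u : ℝ × ℝ} (h : u ≠ 0) : 0 < sq2 u := by
  rcases eq_or_ne u.1 0 with h1 | h1
  · have h2 : u.2 ≠ 0 := fun h2 => h (Prod.ext h1 h2)
    have := sq_pos_of_ne_zero h2
    unfold sq2; nlinarith [sq_nonneg u.1]
  · have := sq_pos_of_ne_zero h1
    unfold sq2; nlinarith [sq_nonneg u.2]

lemma key (k : ℝ) (T X Y : ℝ × ℝ) (hX : X ≠ T) (hY : Y ≠ T)
    (heq : 1 / sq2 (X - T) + 1 / sq2 (Y - T) = k) :
    k * sq2 (Y - T) ≠ 1 ∧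
    Gamma k T Y = sq2 X - 2 * (X.1 * T.1 + X.2 * T.2) := by
  have hx : (0:ℝ) < sq2 (X - T) := sq2_pos (sub_ne_zero.mpr hX)
  have hy : (0:ℝ) < sq2 (Y - T) := sq2_pos (sub_ne_zero.mpr hY)
  have hk : k * sq2 (Y - T) - 1 = sq2 (Y - T) / sq2 (X - T) := by
    field_simp at heq ⊢
    nlinarith [heq]
  have hne : k * sq2 (Y - T) ≠ 1 := by
    intro h
    rw [h, sub_self] at hk
    have : sq2 (Y - T) / sq2 (X - T) > 0 := div_pos hy hx
    linarith [hk ▸ this]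
  refine ⟨hne, ?_⟩
  have hne' : k * sq2 (Y - T) - 1 ≠ 0 := sub_ne_zero.mpr hne
  have hG : sq2 (Y - T) / (k * sq2 (Y - T) - 1) = sq2 (X - T) := by
    rw [hk]
    field_simp
  rw [Gamma, hG]
  simp only [sq2, Prod.fst_sub, Prod.snd_sub]
  ring

theorem determinant_vanishes_at_solution
    (a1 a2 b1 b2 c1 c2 d1 d2 : ℝ) (kA kB kC kD : ℝ)
    (A B C D : ℝ × ℝ)
    (hA : A = (a1, a2)) (hB : B = (b1, b2)) (hC : C = (c1, c2)) (hD : D = (d1, d2))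
    (hAB : A ≠ B) (hAC : A ≠ C) (hAD : A ≠ D)
    (hBC : B ≠ C) (hBD : B ≠ D) (hCD : C ≠ D)
    (hkA : kA ≠ 0) (hkB : kB ≠ 0) (hkC : kC ≠ 0) (hkD : kD ≠ 0)
    (X Y : ℝ × ℝ)
    (hsol : IsRealSol A B C D kA kB kC kD X Y) :
    (kA * sq2 (Y - A) ≠ 1 ∧ kB * sq2 (Y - B) ≠ 1 ∧
     kC * sq2 (Y - C) ≠ 1 ∧ kD * sq2 (Y - D) ≠ 1) ∧
    (Matrix.det
      !![Gamma kA A Y, Gamma kB B Y, Gamma kC C Y, Gamma kD D Y;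
         a1, b1, c1, d1;
         a2, b2, c2, d2;
         1, 1, 1, 1] = 0) := by
  obtain ⟨⟨hXA, hXB, hXC, hXD⟩, ⟨hYA, hYB, hYC, hYD⟩, eA, eB, eC, eD⟩ := hsol
  obtain ⟨nA, gA⟩ := key kA A X Y hXA hYA eA
  obtain ⟨nB, gB⟩ := key kB B X Y hXB hYB eB
  obtain ⟨nC, gC⟩ := key kC C X Y hXC hYC eC
  obtain ⟨nD, gD⟩ := key kD D X Y hXD hYD eD
  refine ⟨⟨nA, nB, nC, nD⟩, ?_⟩
  rw [gA, gB, gC, gD, hA, hB, hC, hD]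
  rw [← Matrix.exists_vecMul_eq_zero_iff]
  refine ⟨![1, 2 * X.1, 2 * X.2, -sq2 X], ?_, ?_⟩
  · intro h
    have := congrFun h 0
    simp at this
  · funext j
    fin_cases j <;>
      simp [Matrix.vecMul, dotProduct, Fin.sum_univ_succ, sq2] <;> ring
end

section
/- Let A, B, C, D ∈ ℝ² be pairwise distinct points and k_A, k_B, k_C, k_D nonzero reals. Suppose (X_P, Y_P) and (X_Q, Y_Q) are real solutions of System (*) such that X_P ≠ X_Q and Γ_T(Y_P) = Γ_T(Y_Q) for each T ∈ {A, B, C}. Then the points A, B, C are collinear. -/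
lemma gamma_eq (k : ℝ) (T X Y : ℝ × ℝ) (hX : X ≠ T) (hY : Y ≠ T)
    (h : 1 / sq2 (X - T) + 1 / sq2 (Y - T) = k) :
    Gamma k T Y = sq2 X - 2 * (X.1 * T.1 + X.2 * T.2) := by
  have ha : 0 < sq2 (X - T) := sq2_pos (sub_ne_zero.mpr hX)
  have hb : 0 < sq2 (Y - T) := sq2_pos (sub_ne_zero.mpr hY)
  have hden : k * sq2 (Y - T) - 1 = sq2 (Y - T) / sq2 (X - T) := by
    field_simp at h ⊢
    nlinarith [h]
  have hden' : k * sq2 (Y - T) - 1 ≠ 0 := by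
    rw [hden]
    positivity
  have hfrac : sq2 (Y - T) / (k * sq2 (Y - T) - 1) = sq2 (X - T) := by
    rw [hden]
    field_simp
  unfold Gamma
  rw [hfrac]
  unfold sq2
  simp only [Prod.fst_sub, Prod.snd_sub]
  ring

theorem collinear_of_two_solutions_same_Gamma
    (A B C D : ℝ × ℝ) (kA kB kC kD : ℝ)
    (hAB : A ≠ B) (hAC : A ≠ C) (hAD : A ≠ D)
    (hBC : B ≠ C) (hBD : B ≠ D) (hCD : C ≠ D)
    (hkA : kA ≠ 0) (hkB : kB ≠ 0) (hkC : kC ≠ 0) (hkD : kD ≠ 0)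
    (XP YP XQ YQ : ℝ × ℝ)
    (hP : IsRealSol A B C D kA kB kC kD XP YP)
    (hQ : IsRealSol A B C D kA kB kC kD XQ YQ)
    (hX : XP ≠ XQ)
    (hGA : Gamma kA A YP = Gamma kA A YQ)
    (hGB : Gamma kB B YP = Gamma kB B YQ)
    (hGC : Gamma kC C YP = Gamma kC C YQ) :
    Collinear ℝ ({A, B, C} : Set (ℝ × ℝ)) := by
  obtain ⟨⟨hXPA, hXPB, hXPC, _⟩, ⟨hYPA, hYPB, hYPC, _⟩, hPA, hPB, hPC, _⟩ := hP
  obtain ⟨⟨hXQA, hXQB, hXQC, _⟩, ⟨hYQA, hYQB, hYQC, _⟩, hQA, hQB, hQC, _⟩ := hQ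
  rw [gamma_eq kA A XP YP hXPA hYPA hPA, gamma_eq kA A XQ YQ hXQA hYQA hQA] at hGA
  rw [gamma_eq kB B XP YP hXPB hYPB hPB, gamma_eq kB B XQ YQ hXQB hYQB hQB] at hGB
  rw [gamma_eq kC C XP YP hXPC hYPC hPC, gamma_eq kC C XQ YQ hXQC hYQC hQC] at hGC
  set w : ℝ × ℝ := XP - XQ with hw
  have hwne : w ≠ 0 := sub_ne_zero.mpr hX
  have hs : 0 < sq2 w := sq2_pos hwne
  have hs' : w.1 ^ 2 + w.2 ^ 2 ≠ 0 := ne_of_gt hs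
  have eB : w.1 * (B.1 - A.1) + w.2 * (B.2 - A.2) = 0 := by
    simp only [hw, Prod.fst_sub, Prod.snd_sub]
    unfold sq2 at hGA hGB
    linear_combination (hGA - hGB) / 2
  have eC : w.1 * (C.1 - A.1) + w.2 * (C.2 - A.2) = 0 := by
    simp only [hw, Prod.fst_sub, Prod.snd_sub]
    unfold sq2 at hGA hGC
    linear_combination (hGA - hGC) / 2
  rw [collinear_iff_of_mem (Set.mem_insert A {B, C})]
  refine ⟨(-w.2, w.1), ?_⟩
  intro p hp
  have key : ∀ u : ℝ × ℝ, w.1 * (u.1 - A.1) + w.2 * (u.2 - A.2) = 0 →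
      ∃ r : ℝ, u = r • ((-w.2, w.1) : ℝ × ℝ) + A := by
    intro u hu
    refine ⟨(w.1 * (u.2 - A.2) - w.2 * (u.1 - A.1)) / (w.1 ^ 2 + w.2 ^ 2), ?_⟩
    have h1 : u.1 = (w.1 * (u.2 - A.2) - w.2 * (u.1 - A.1)) / (w.1 ^ 2 + w.2 ^ 2) * (-w.2) + A.1 := by
      field_simp
      linear_combination w.1 * hu
    have h2 : u.2 = (w.1 * (u.2 - A.2) - w.2 * (u.1 - A.1)) / (w.1 ^ 2 + w.2 ^ 2) * w.1 + A.2 := by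
      field_simp
      linear_combination w.2 * hu
    apply Prod.ext <;>
      simp only [Prod.fst_add, Prod.snd_add, Prod.smul_mk, smul_eq_mul]
    · exact h1
    · exact h2
  rcases hp with h | h | h
  · exact ⟨0, by simp [h]⟩
  · exact h ▸ key B eB
  · exact h ▸ key C eC
end

section
/- Let A, B, D ∈ ℝ² be three points that are not collinear, regarded as points of ℂ², let q(u) = u₁² + u₂² be the complex quadratic form on ℂ², and let r_A, r_B, r_D ∈ ℝ. If η ∈ ℂ² satisfies q(η − T) = r_T for each T ∈ {A, B, D}, then η ∈ ℝ², i.e. both coordinates of η are real. Equivalently: if a point of ℂ² with a non-real coordinate lies on three circles q(η − T) = r_T with real centers A, B, D and real right-hand sides, then A, B, D are collinear. -/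
/-- The complex quadratic form `q(u) = u₁² + u₂²` on `ℂ²`. -/
def qC (u : ℂ × ℂ) : ℂ := u.1 ^ 2 + u.2 ^ 2

/-- The natural embedding of `ℝ²` into `ℂ²`. -/
def toC (P : ℝ × ℝ) : ℂ × ℂ := ((P.1 : ℂ), (P.2 : ℂ))

lemma collinear_of_det_eq_zero (A B D : ℝ × ℝ)
    (h : (B.1 - A.1) * (D.2 - A.2) - (B.2 - A.2) * (D.1 - A.1) = 0) :
    Collinear ℝ ({A, B, D} : Set (ℝ × ℝ)) := by
  rw [collinear_iff_of_mem (Set.mem_insert A _)]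
  by_cases hu : B - A = 0
  · refine ⟨D - A, ?_⟩
    intro p hp
    rcases hp with rfl | rfl | rfl
    · exact ⟨0, by simp⟩
    · exact ⟨0, by have := sub_eq_zero.mp hu; simp [this.symm]⟩
    · exact ⟨1, by simp [Prod.ext_iff]⟩
  · refine ⟨B - A, ?_⟩
    have hD : ∃ r : ℝ, D - A = r • (B - A) := by
      have h1 : B.1 - A.1 ≠ 0 ∨ B.2 - A.2 ≠ 0 := by
        by_contra hc
        push_neg at hc
        exact hu (by ext <;> simp [hc.1, hc.2])
      rcases h1 with h1 | h1
      · exact ⟨(D.1 - A.1) / (B.1 - A.1), by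
          ext <;> simp [Prod.smul_def, smul_eq_mul] <;> field_simp <;> nlinarith [h]⟩
      · exact ⟨(D.2 - A.2) / (B.2 - A.2), by
          ext <;> simp [Prod.smul_def, smul_eq_mul] <;> field_simp <;> nlinarith [h]⟩
    intro p hp
    rcases hp with rfl | rfl | rfl
    · exact ⟨0, by simp⟩
    · exact ⟨1, by simp [Prod.ext_iff]⟩
    · obtain ⟨r, hr⟩ := hD
      exact ⟨r, by rw [← hr]; simp [Prod.ext_iff]⟩

/-- A point of `ℂ²` lying on three "real circles" `q(η − T) = r_T` whose real
centers `A, B, D` are not collinear must itself be real. -/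
theorem real_point_on_three_circles
    (A B D : ℝ × ℝ)
    (habd : ¬ Collinear ℝ ({A, B, D} : Set (ℝ × ℝ)))
    (rA rB rD : ℝ)
    (η : ℂ × ℂ)
    (hA : qC (η - toC A) = (rA : ℂ))
    (hB : qC (η - toC B) = (rB : ℂ))
    (hD : qC (η - toC D) = (rD : ℂ)) :
    (∃ u : ℝ, η.1 = (u : ℂ)) ∧ (∃ v : ℝ, η.2 = (v : ℂ)) := by
  have hdet : (B.1 - A.1) * (D.2 - A.2) - (B.2 - A.2) * (D.1 - A.1) ≠ 0 := by
    intro h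
    exact habd (collinear_of_det_eq_zero A B D h)
  have imA := congrArg Complex.im hA
  have imB := congrArg Complex.im hB
  have imD := congrArg Complex.im hD
  simp [qC, toC, pow_two, Complex.mul_im, Complex.sub_im, Complex.sub_re] at imA imB imD
  set p := η.1.im with hp
  set q := η.2.im with hq
  have e1 : p * (B.1 - A.1) + q * (B.2 - A.2) = 0 := by nlinarith [imA, imB]
  have e2 : p * (D.1 - A.1) + q * (D.2 - A.2) = 0 := by nlinarith [imA, imD]
  have hp0 : p = 0 := by
    have : p * ((B.1 - A.1) * (D.2 - A.2) - (B.2 - A.2) * (D.1 - A.1)) = 0 := by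
      linear_combination (D.2 - A.2) * e1 - (B.2 - A.2) * e2
    rcases mul_eq_zero.mp this with h | h
    · exact h
    · exact absurd h hdet
  have hq0 : q = 0 := by
    have : q * ((B.1 - A.1) * (D.2 - A.2) - (B.2 - A.2) * (D.1 - A.1)) = 0 := by
      linear_combination (B.1 - A.1) * e2 - (D.1 - A.1) * e1
    rcases mul_eq_zero.mp this with h | h
    · exact h
    · exact absurd h hdet
  constructor
  · exact ⟨η.1.re, by apply Complex.ext <;> simp [← hp, hp0]⟩
  · exact ⟨η.2.re, by apply Complex.ext <;> simp [← hq, hq0]⟩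
end

section
/- Normalize A = (0, 0) and B = (1, 0), let C = (c₁, c₂) with c₂ ≠ 0 and D ∈ ℝ² make A, B, C, D pairwise distinct, and let k_A, k_B, k_C, k_D be nonzero reals. Let (X, Y) be a real solution of System (*) with Y = (y₁, y₂), and for T ∈ {A, C} set Γ̄_T = ‖Y−T‖²/(k_T‖Y−T‖² − 1). Then k_AΓ̄_A − 1 ≠ 0 and k_CΓ̄_C − 1 ≠ 0, and y₂ = (1/(2c₂))·[Γ̄_A(k_CΓ̄_C − 1) − Γ̄_C(k_AΓ̄_A − 1) + (c₁² + c₂²)(k_AΓ̄_A − 1)(k_CΓ̄_C − 1)] / [(k_AΓ̄_A − 1)(k_CΓ̄_C − 1)] − (c₁/c₂)·y₁. -/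
/-- `Γ̄_T(Y) = ‖Y−T‖²/(k_T‖Y−T‖² − 1)`. -/
noncomputable def GammaBar (k : ℝ) (T Y : ℝ × ℝ) : ℝ :=
  sq2 (Y - T) / (k * sq2 (Y - T) - 1)

theorem second_coordinate_formula
    (c1 c2 : ℝ) (hc2 : c2 ≠ 0) (D : ℝ × ℝ) (kA kB kC kD : ℝ)
    (A B C : ℝ × ℝ)
    (hA : A = ((0 : ℝ), (0 : ℝ))) (hB : B = ((1 : ℝ), (0 : ℝ))) (hC : C = (c1, c2))
    (hAB : A ≠ B) (hAC : A ≠ C) (hAD : A ≠ D)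
    (hBC : B ≠ C) (hBD : B ≠ D) (hCD : C ≠ D)
    (hkA : kA ≠ 0) (hkB : kB ≠ 0) (hkC : kC ≠ 0) (hkD : kD ≠ 0)
    (X Y : ℝ × ℝ) (y1 y2 : ℝ) (hY : Y = (y1, y2))
    (hsol : IsRealSol A B C D kA kB kC kD X Y) :
    kA * GammaBar kA A Y - 1 ≠ 0 ∧ kC * GammaBar kC C Y - 1 ≠ 0 ∧
    y2 = (1 / (2 * c2)) *
      ((GammaBar kA A Y * (kC * GammaBar kC C Y - 1)
        - GammaBar kC C Y * (kA * GammaBar kA A Y - 1)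
        + (c1 ^ 2 + c2 ^ 2) * (kA * GammaBar kA A Y - 1) * (kC * GammaBar kC C Y - 1)) /
      ((kA * GammaBar kA A Y - 1) * (kC * GammaBar kC C Y - 1)))
      - (c1 / c2) * y1 := by
  obtain ⟨⟨hXA, _, hXC, _⟩, ⟨hYA, _, hYC, _⟩, hEA, _, hEC, _⟩ := hsol
  have ha : (0:ℝ) < sq2 (X - A) := sq2_pos (sub_ne_zero.mpr hXA)
  have ha' : (0:ℝ) < sq2 (Y - A) := sq2_pos (sub_ne_zero.mpr hYA)
  have hcx : (0:ℝ) < sq2 (X - C) := sq2_pos (sub_ne_zero.mpr hXC)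
  have hc' : (0:ℝ) < sq2 (Y - C) := sq2_pos (sub_ne_zero.mpr hYC)
  -- denominators
  have hdA : kA * sq2 (Y - A) - 1 = sq2 (Y - A) / sq2 (X - A) := by
    field_simp
    field_simp at hEA
    nlinarith [hEA]
  have hdC : kC * sq2 (Y - C) - 1 = sq2 (Y - C) / sq2 (X - C) := by
    field_simp
    field_simp at hEC
    nlinarith [hEC]
  have hGA : GammaBar kA A Y = sq2 (X - A) := by
    rw [GammaBar, hdA]
    rw [div_div_eq_mul_div]
    exact mul_div_cancel_left₀ _ ha'.ne'
  have hGC : GammaBar kC C Y = sq2 (X - C) := by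
    rw [GammaBar, hdC]
    rw [div_div_eq_mul_div]
    exact mul_div_cancel_left₀ _ hc'.ne'
  have hkGA : kA * GammaBar kA A Y - 1 = sq2 (X - A) / sq2 (Y - A) := by
    rw [hGA]
    field_simp at hEA ⊢
    nlinarith [hEA]
  have hkGC : kC * GammaBar kC C Y - 1 = sq2 (X - C) / sq2 (Y - C) := by
    rw [hGC]
    field_simp at hEC ⊢
    nlinarith [hEC]
  have hnA : kA * GammaBar kA A Y - 1 ≠ 0 := by
    rw [hkGA]; positivity
  have hnC : kC * GammaBar kC C Y - 1 ≠ 0 := by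
    rw [hkGC]; positivity
  refine ⟨hnA, hnC, ?_⟩
  rw [hkGA, hkGC, hGA, hGC]
  have key : sq2 (Y - A) - sq2 (Y - C) + (c1 ^ 2 + c2 ^ 2) = 2 * c1 * y1 + 2 * c2 * y2 := by
    subst hA hC hY
    simp only [sq2, Prod.fst_sub, Prod.snd_sub]
    ring
  have expand : (sq2 (X - A) * (sq2 (X - C) / sq2 (Y - C))
        - sq2 (X - C) * (sq2 (X - A) / sq2 (Y - A))
        + (c1 ^ 2 + c2 ^ 2) * (sq2 (X - A) / sq2 (Y - A)) * (sq2 (X - C) / sq2 (Y - C))) /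
      ((sq2 (X - A) / sq2 (Y - A)) * (sq2 (X - C) / sq2 (Y - C)))
      = sq2 (Y - A) - sq2 (Y - C) + (c1 ^ 2 + c2 ^ 2) := by
    field_simp
  rw [expand, key]
  field_simp
  ring
end

section
/- Take A = (−1, 0), B = (1, 0), C = (−2, 0), D = (2, 0), k_A = k_B = −2/3, and k_C = k_D = 2/3. Then the set of complex solutions of System (*) is infinite. More precisely, for every (x, y) ∈ ℂ² with 2x²y² + 5(x² + y²) + 8 = 0 and x² + 1 ≠ 0, y² + 1 ≠ 0, x² + 4 ≠ 0, y² + 4 ≠ 0, the pair X = (0, x), Y = (0, y) is a complex solution of System (*), and there are infinitely many such pairs (x, y). -/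
/-- `(X, Y) ∈ ℂ² × ℂ²` is a complex solution of System (*) for the configuration
`A, B, C, D` with constants `kA, kB, kC, kD`. -/
def IsComplexSol (A B C D : ℝ × ℝ) (kA kB kC kD : ℝ) (X Y : ℂ × ℂ) : Prop :=
  (qC (X - toC A) ≠ 0 ∧ qC (X - toC B) ≠ 0 ∧ qC (X - toC C) ≠ 0 ∧ qC (X - toC D) ≠ 0) ∧
  (qC (Y - toC A) ≠ 0 ∧ qC (Y - toC B) ≠ 0 ∧ qC (Y - toC C) ≠ 0 ∧ qC (Y - toC D) ≠ 0) ∧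
  1 / qC (X - toC A) + 1 / qC (Y - toC A) = (kA : ℂ) ∧
  1 / qC (X - toC B) + 1 / qC (Y - toC B) = (kB : ℂ) ∧
  1 / qC (X - toC C) + 1 / qC (Y - toC C) = (kC : ℂ) ∧
  1 / qC (X - toC D) + 1 / qC (Y - toC D) = (kD : ℂ)

/-!
With `X = (0, x)` and `Y = (0, y)` the system only involves `s = x²` and `t = y²`, and for the
points `(±1, 0)`, `(±2, 0)` it reads `1/(s+1) + 1/(t+1) = -2/3`, `1/(s+4) + 1/(t+4) = 2/3`.
Both equations reduce to the single conic `2st + 5(s+t) + 8 = 0`, since on it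
`(s+1)(t+1) = -3(s+t+2)/2` and `(s+4)(t+4) = 3(s+t+8)/2`. Solving the conic for `y` at each
`x ∈ ℕ` gives infinitely many solutions.
-/

lemma qC_zero_sub_toC (x : ℂ) (a : ℝ) : qC ((0, x) - toC (a, 0)) = x ^ 2 + a ^ 2 := by
  simp only [qC, toC, Prod.mk_sub_mk]
  push_cast
  ring

section Conic

variable {s t : ℂ}

lemma inv_add_one_add_inv_add_one_of_conic (h : 2 * s * t + 5 * (s + t) + 8 = 0)
    (hs : s + 1 ≠ 0) (ht : t + 1 ≠ 0) : 1 / (s + 1) + 1 / (t + 1) = -(2 / 3) := by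
  field_simp
  linear_combination h

lemma inv_add_four_add_inv_add_four_of_conic (h : 2 * s * t + 5 * (s + t) + 8 = 0)
    (hs : s + 4 ≠ 0) (ht : t + 4 ≠ 0) : 1 / (s + 4) + 1 / (t + 4) = 2 / 3 := by
  field_simp
  linear_combination -h

end Conic

theorem isComplexSol_of_conic {x y : ℂ} (h : 2 * x ^ 2 * y ^ 2 + 5 * (x ^ 2 + y ^ 2) + 8 = 0)
    (hx1 : x ^ 2 + 1 ≠ 0) (hy1 : y ^ 2 + 1 ≠ 0) (hx4 : x ^ 2 + 4 ≠ 0) (hy4 : y ^ 2 + 4 ≠ 0) :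
    IsComplexSol (-1, 0) (1, 0) (-2, 0) (2, 0) (-(2 / 3)) (-(2 / 3)) (2 / 3) (2 / 3)
      (0, x) (0, y) := by
  simp only [IsComplexSol, qC_zero_sub_toC]
  push_cast
  norm_num only
  exact ⟨⟨hx1, hx1, hx4, hx4⟩, ⟨hy1, hy1, hy4, hy4⟩,
    inv_add_one_add_inv_add_one_of_conic h hx1 hy1,
    inv_add_one_add_inv_add_one_of_conic h hx1 hy1,
    inv_add_four_add_inv_add_four_of_conic h hx4 hy4,
    inv_add_four_add_inv_add_four_of_conic h hx4 hy4⟩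
def conicPairs : Set (ℂ × ℂ) :=
  {xy | 2 * xy.1 ^ 2 * xy.2 ^ 2 + 5 * (xy.1 ^ 2 + xy.2 ^ 2) + 8 = 0 ∧
    xy.1 ^ 2 + 1 ≠ 0 ∧ xy.2 ^ 2 + 1 ≠ 0 ∧ xy.1 ^ 2 + 4 ≠ 0 ∧ xy.2 ^ 2 + 4 ≠ 0}

lemma exists_mem_conicPairs {x : ℂ} (hx1 : x ^ 2 + 1 ≠ 0) (hx4 : x ^ 2 + 4 ≠ 0)
    (hx5 : 2 * x ^ 2 + 5 ≠ 0) : ∃ y, (x, y) ∈ conicPairs := by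
  obtain ⟨y, hy⟩ := IsAlgClosed.exists_pow_nat_eq (-(5 * x ^ 2 + 8) / (2 * x ^ 2 + 5)) two_pos
  have hy1 : y ^ 2 + 1 = -3 * (x ^ 2 + 1) / (2 * x ^ 2 + 5) := by
    rw [hy, div_add' _ _ _ hx5]; ring
  have hy4 : y ^ 2 + 4 = 3 * (x ^ 2 + 4) / (2 * x ^ 2 + 5) := by
    rw [hy, div_add' _ _ _ hx5]; ring
  refine ⟨y, ?_, hx1, ?_, hx4, ?_⟩
  · rw [hy]; field_simp; ring
  · rw [hy1]; exact div_ne_zero (mul_ne_zero (by norm_num) hx1) hx5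
  · rw [hy4]; exact div_ne_zero (mul_ne_zero (by norm_num) hx4) hx5

lemma conicPairs_infinite : conicPairs.Infinite := by
  have hnat : Set.range ((↑) : ℕ → ℂ) ⊆ Prod.fst '' conicPairs := by
    rintro _ ⟨n, rfl⟩
    obtain ⟨y, hy⟩ := exists_mem_conicPairs (x := (n : ℂ))
      (by exact_mod_cast (by positivity : n ^ 2 + 1 ≠ 0))
      (by exact_mod_cast (by positivity : n ^ 2 + 4 ≠ 0))
      (by exact_mod_cast (by positivity : 2 * n ^ 2 + 5 ≠ 0))
    exact ⟨_, hy, rfl⟩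
  exact Set.Infinite.of_image _ ((Set.infinite_range_of_injective Nat.cast_injective).mono hnat)

theorem second_example_infinitely_many_solutions
    (A B C D : ℝ × ℝ) (kA kB kC kD : ℝ)
    (hA : A = ((-1 : ℝ), (0 : ℝ))) (hB : B = ((1 : ℝ), (0 : ℝ)))
    (hC : C = ((-2 : ℝ), (0 : ℝ))) (hD : D = ((2 : ℝ), (0 : ℝ)))
    (hkA : kA = -(2 / 3)) (hkB : kB = -(2 / 3)) (hkC : kC = 2 / 3) (hkD : kD = 2 / 3) :
    -- the set of complex solutions of System (*) is infinite
    {XY : (ℂ × ℂ) × (ℂ × ℂ) |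
      IsComplexSol A B C D kA kB kC kD XY.1 XY.2}.Infinite ∧
    -- every suitable (x, y) on the curve 2x²y² + 5(x² + y²) + 8 = 0 yields a solution
    (∀ x y : ℂ,
      2 * x ^ 2 * y ^ 2 + 5 * (x ^ 2 + y ^ 2) + 8 = 0 →
      x ^ 2 + 1 ≠ 0 → y ^ 2 + 1 ≠ 0 → x ^ 2 + 4 ≠ 0 → y ^ 2 + 4 ≠ 0 →
      IsComplexSol A B C D kA kB kC kD ((0 : ℂ), x) ((0 : ℂ), y)) ∧
    -- and there are infinitely many such pairs (x, y)
    {xy : ℂ × ℂ |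
      2 * xy.1 ^ 2 * xy.2 ^ 2 + 5 * (xy.1 ^ 2 + xy.2 ^ 2) + 8 = 0 ∧
      xy.1 ^ 2 + 1 ≠ 0 ∧ xy.2 ^ 2 + 1 ≠ 0 ∧
      xy.1 ^ 2 + 4 ≠ 0 ∧ xy.2 ^ 2 + 4 ≠ 0}.Infinite := by
  subst hA hB hC hD hkA hkB hkC hkD
  refine ⟨?_, fun _ _ => isComplexSol_of_conic, conicPairs_infinite⟩
  have hemb : Set.InjOn (fun xy : ℂ × ℂ => (((0 : ℂ), xy.1), ((0 : ℂ), xy.2))) conicPairs :=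
    fun a _ b _ hab => Prod.ext (congrArg (·.1.2) hab) (congrArg (·.2.2) hab)
  refine (conicPairs_infinite.image hemb).mono ?_
  rintro _ ⟨xy, ⟨h, hx1, hy1, hx4, hy4⟩, rfl⟩
  exact isComplexSol_of_conic h hx1 hy1 hx4 hy4
end
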